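/- Let (Γ, I) be an independence alphabet and η : M(Γ, I) → Q an embedding into the queue monoid. Define Γ₊ = {a : π(η(a)) ≠ ε and π̄(η(a)) = ε} and Γ₋ = {a : π(η(a)) = ε and π̄(η(a)) ≠ ε}. Then no two letters of Γ₊ are independent, no two letters of Γ₋ are independent, and every letter of Γ₊ is independent of every letter of Γ₋; i.e., (Γ₊ ∪ Γ₋, I) is a complete bipartite graph. -/

import Mathlib

def qstep (A : Type) [DecidableEq A] : Option (List A) → A ⊕ A → Option (List A)
  | none, _ => none
  | some q, Sum.inl a => some (q ++ [a])
  | some q, Sum.inr a =>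
      match q with
      | [] => none
      | b :: q' => if b = a then some q' else none

def qact (A : Type) [DecidableEq A] (q : Option (List A)) (u : List (A ⊕ A)) :
    Option (List A) :=
  u.foldl (qstep A) q

def QEquiv (A : Type) [DecidableEq A] (u v : List (A ⊕ A)) : Prop :=
  ∀ q : Option (List A), qact A q u = qact A q v

/-- The congruence on the free monoid of queue actions identifying sequences with the
same effect on every queue state. -/
def queueCon (A : Type) [DecidableEq A] : Con (FreeMonoid (A ⊕ A)) where
  r u v := QEquiv A u.toList v.toList
  iseqv := ⟨fun _ _ => rfl, fun h q => (h q).symm, fun h1 h2 q => (h1 q).trans (h2 q)⟩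
  mul' := by
    intro u v u' v' hu hv q
    have h1 := hu q
    have h2 := hv (qact A q v.toList)
    show qact A q (u * u').toList = qact A q (v * v').toList
    rw [FreeMonoid.toList_mul, FreeMonoid.toList_mul]
    unfold qact at h1 h2 ⊢
    rw [List.foldl_append, List.foldl_append, h1, h2]

/-- The queue monoid over the alphabet `A`. -/
abbrev QueueMonoid (A : Type) [DecidableEq A] := (queueCon A).Quotient

/-- The congruence on the free monoid generated by `ab = ba` for independent `(a,b)`. -/
def traceCon {Γ : Type} (I : Γ → Γ → Prop) : Con (FreeMonoid Γ) :=
  conGen fun u v => ∃ a b : Γ, I a b ∧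
    u = FreeMonoid.of a * FreeMonoid.of b ∧ v = FreeMonoid.of b * FreeMonoid.of a

/-- The trace monoid of the independence alphabet `(Γ, I)`. -/
abbrev TraceMonoid {Γ : Type} (I : Γ → Γ → Prop) := (traceCon I).Quotient

/-- Positive projection: erase all read actions. -/
def ppr {A : Type} (u : List (A ⊕ A)) : List A :=
  u.filterMap (Sum.elim some fun _ => none)

/-- Negative projection: erase all write actions (mapping ā to a). -/
def npr {A : Type} (u : List (A ⊕ A)) : List A :=
  u.filterMap (Sum.elim (fun _ => none) some)

/-- `a ∈ Γ₊`: some (equivalently, every) representative of `η(a)` has nonempty positive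
projection and empty negative projection. -/
def GammaPlus {Γ A : Type} [DecidableEq A] (I : Γ → Γ → Prop)
    (η : TraceMonoid I →* QueueMonoid A) (a : Γ) : Prop :=
  ∃ w : List (A ⊕ A),
    (queueCon A).mk' (FreeMonoid.ofList w) = η ((traceCon I).mk' (FreeMonoid.of a)) ∧
    ppr w ≠ [] ∧ npr w = []

/-- `a ∈ Γ₋`: some representative of `η(a)` has empty positive projection and nonempty
negative projection. -/
def GammaMinus {Γ A : Type} [DecidableEq A] (I : Γ → Γ → Prop)
    (η : TraceMonoid I →* QueueMonoid A) (a : Γ) : Prop :=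
  ∃ w : List (A ⊕ A),
    (queueCon A).mk' (FreeMonoid.ofList w) = η ((traceCon I).mk' (FreeMonoid.of a)) ∧
    ppr w = [] ∧ npr w ≠ []

/-- `a ∈ Γ±`: some representative of `η(a)` has both projections nonempty. -/
def GammaPM {Γ A : Type} [DecidableEq A] (I : Γ → Γ → Prop)
    (η : TraceMonoid I →* QueueMonoid A) (a : Γ) : Prop :=
  ∃ w : List (A ⊕ A),
    (queueCon A).mk' (FreeMonoid.ofList w) = η ((traceCon I).mk' (FreeMonoid.of a)) ∧
    ppr w ≠ [] ∧ npr w ≠ []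

/-! Letters of `Γ₊` act on the queue as pure writes `x`, letters of `Γ₋` as pure reads `y`,
and writes (likewise reads) form a free submonoid of the queue monoid. Two independent
letters `a, b` of `Γ₊` (or of `Γ₋`) would thus give commuting words `x, y`, hence
`x ^ |y| = y ^ |x|` and, by injectivity, `a ^ |y| = b ^ |x|` in the trace monoid, which the
projection onto the letter `a` refutes. For dependent `a ∈ Γ₊` and `b ∈ Γ₋`, reading `y`
commutes with writing `x` once `x ^ |y|` has been queued, so `a ^ |y| b a = a ^ |y| a b`
in the trace monoid, which the projection onto the dependent pair `{a, b}` refutes. -/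

namespace FreeMonoid

variable {α : Type*}

theorem length_pow (x : FreeMonoid α) (n : ℕ) : (x ^ n).length = n * x.length := by
  induction n with
  | zero => simp
  | succ n ih => rw [pow_succ, length_mul, ih, Nat.succ_mul]

theorem pow_length_eq_of_commute {x y : FreeMonoid α} (h : Commute x y) :
    x ^ y.length = y ^ x.length := by
  have hcomm : (x ^ y.length * y ^ x.length).toList = (y ^ x.length * x ^ y.length).toList :=
    congrArg toList (h.pow_pow _ _).eq
  rw [toList_mul, toList_mul] at hcomm
  exact toList.injective (List.append_inj hcomm (by
    change (x ^ y.length).length = (y ^ x.length).length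
    rw [length_pow, length_pow, Nat.mul_comm])).1

def restrict (p : α → Prop) [DecidablePred p] : FreeMonoid α →* FreeMonoid α :=
  lift fun c => if p c then of c else 1

@[simp] theorem restrict_of (p : α → Prop) [DecidablePred p] (c : α) :
    restrict p (of c) = if p c then of c else 1 :=
  lift_eval_of _ _

end FreeMonoid

section Trace

variable {Γ : Type} {I : Γ → Γ → Prop}

theorem commute_mk'_of_of {a b : Γ} (hab : I a b) :
    Commute ((traceCon I).mk' (FreeMonoid.of a)) ((traceCon I).mk' (FreeMonoid.of b)) := by
  rw [Commute, SemiconjBy, ← map_mul, ← map_mul]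
  exact (Con.eq _).mpr (ConGen.Rel.of _ _ ⟨a, b, hab, rfl, rfl⟩)

def traceProj (p : Γ → Prop) [DecidablePred p] (hp : ∀ c d, p c → p d → ¬ I c d) :
    TraceMonoid I →* FreeMonoid Γ :=
  (traceCon I).lift (FreeMonoid.restrict p) <| Con.conGen_le.mpr <| by
    rintro _ _ ⟨a, b, hab, rfl, rfl⟩
    by_cases ha : p a
    · by_cases hb : p b
      · exact absurd hab (hp a b ha hb)
      · simp [Con.ker_rel, hb]
    · simp [Con.ker_rel, ha]

@[simp] theorem traceProj_mk'_of (p : Γ → Prop) [DecidablePred p]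
    (hp : ∀ c d, p c → p d → ¬ I c d) (c : Γ) :
    traceProj p hp ((traceCon I).mk' (FreeMonoid.of c)) =
      if p c then FreeMonoid.of c else 1 :=
  (Con.lift_mk' _ _).trans (FreeMonoid.restrict_of p c)

end Trace

theorem eq_map_inl_of_npr_eq_nil {A : Type} {w : List (A ⊕ A)} (h : npr w = []) :
    w = (ppr w).map Sum.inl := by
  induction w with
  | nil => rfl
  | cons c w ih =>
    cases c with
    | inl a => exact congrArg (Sum.inl a :: ·) (ih h)
    | inr a => exact absurd h (List.cons_ne_nil _ _)

theorem eq_map_inr_of_ppr_eq_nil {A : Type} {w : List (A ⊕ A)} (h : ppr w = []) :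
    w = (npr w).map Sum.inr := by
  induction w with
  | nil => rfl
  | cons c w ih =>
    cases c with
    | inl a => exact absurd h (List.cons_ne_nil _ _)
    | inr a => exact congrArg (Sum.inr a :: ·) (ih h)

section Queue

variable {A : Type} [DecidableEq A]

@[simp] theorem qact_none (u : List (A ⊕ A)) : qact A none u = none := by
  induction u with
  | nil => rfl
  | cons _ u ih => exact ih

theorem qact_cons (q : Option (List A)) (c : A ⊕ A) (u : List (A ⊕ A)) :
    qact A q (c :: u) = qact A (qstep A q c) u :=
  rfl

theorem qact_append (q : Option (List A)) (u v : List (A ⊕ A)) :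
    qact A q (u ++ v) = qact A (qact A q u) v :=
  List.foldl_append ..

theorem qact_map_inl (q : Option (List A)) (x : List A) :
    qact A q (x.map Sum.inl) = q.map (· ++ x) := by
  induction x generalizing q with
  | nil => cases q <;> simp [qact]
  | cons a x ih => cases q <;> simp [qact_cons, qstep, ih]

theorem qact_map_inr_eq_some_iff {q r y : List A} :
    qact A (some q) (y.map Sum.inr) = some r ↔ q = y ++ r := by
  induction y generalizing q with
  | nil => simp [qact]
  | cons b y ih =>
    cases q with
    | nil => simp [qact_cons, qstep]
    | cons c q =>
      by_cases hcb : c = b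
      · simp [qact_cons, qstep, hcb, ih]
      · simp [qact_cons, qstep, hcb]

theorem qact_map_inr_append {q : List A} (s : List A) {y : List A}
    (hy : y.length ≤ q.length) :
    qact A (some (q ++ s)) (y.map Sum.inr) = (qact A (some q) (y.map Sum.inr)).map (· ++ s) := by
  induction y generalizing q with
  | nil => rfl
  | cons b y ih =>
    cases q with
    | nil => simp at hy
    | cons c q =>
      by_cases hcb : c = b
      · simpa [qact_cons, qstep, hcb] using ih (Nat.le_of_succ_le_succ hy)
      · simp [qact_cons, qstep, hcb]

theorem queueCon_mk'_eq_iff {u v : FreeMonoid (A ⊕ A)} :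
    (queueCon A).mk' u = (queueCon A).mk' v ↔ ∀ q, qact A q u.toList = qact A q v.toList :=
  Con.eq _

variable (A) in
def writes : FreeMonoid A →* QueueMonoid A :=
  (queueCon A).mk'.comp (FreeMonoid.map Sum.inl)

variable (A) in
def reads : FreeMonoid A →* QueueMonoid A :=
  (queueCon A).mk'.comp (FreeMonoid.map Sum.inr)

theorem writes_injective : Function.Injective (writes A) := fun x x' h => by
  simpa [qact_map_inl] using queueCon_mk'_eq_iff.mp h (some [])

theorem reads_injective : Function.Injective (reads A) := fun y y' h => by
  have h' := queueCon_mk'_eq_iff.mp h (some y.toList)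
  have hself : qact A (some y.toList) (y.toList.map Sum.inr) = some [] :=
    qact_map_inr_eq_some_iff.mpr (List.append_nil _).symm
  simp only [FreeMonoid.toList_map] at h'
  rw [hself, eq_comm, qact_map_inr_eq_some_iff, List.append_nil] at h'
  exact FreeMonoid.toList.injective h'

theorem writes_ne_reads (x : FreeMonoid A) {y : FreeMonoid A} (hy : y ≠ 1) :
    writes A x ≠ reads A y := fun h => by
  have h' := queueCon_mk'_eq_iff.mp h (some [])
  simp only [FreeMonoid.toList_map, qact_map_inl, Option.map_some, List.nil_append] at h'
  exact hy (FreeMonoid.toList.injective (List.append_eq_nil_iff.mp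
    (qact_map_inr_eq_some_iff.mp h'.symm).symm).1)

theorem writes_mul_reads_mul_writes {s y : FreeMonoid A} (x : FreeMonoid A)
    (hy : y.length ≤ s.length) :
    writes A s * reads A y * writes A x = writes A s * writes A x * reads A y := by
  simp only [writes, reads, MonoidHom.comp_apply, ← map_mul (queueCon A).mk']
  refine queueCon_mk'_eq_iff.mpr fun q => ?_
  cases q with
  | none => simp
  | some q =>
    simp only [FreeMonoid.toList_mul, FreeMonoid.toList_map, qact_append]
    rw [qact_map_inl, qact_map_inl, Option.map_some, qact_map_inl, Option.map_some,
      qact_map_inr_append (q := q ++ s.toList) x.toList (by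
        simpa [FreeMonoid.length] using le_add_left hy)]

section Embedding

variable {Γ A : Type} [DecidableEq A] {I : Γ → Γ → Prop}

theorem not_indep_of_eq_map {M B : Type*} [Monoid M] (hirr : ∀ a, ¬ I a a)
    (η : TraceMonoid I →* M) (hη : Function.Injective η)
    (φ : FreeMonoid B →* M) (hφ : Function.Injective φ) {a b : Γ} {x y : FreeMonoid B}
    (ha : η ((traceCon I).mk' (FreeMonoid.of a)) = φ x)
    (hb : η ((traceCon I).mk' (FreeMonoid.of b)) = φ y) (hy : y ≠ 1) : ¬ I a b := by
  classical
  intro hab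
  have hxy : Commute x y := by
    have h := ((commute_mk'_of_of hab).map η).eq
    rw [ha, hb, ← map_mul, ← map_mul] at h
    exact hφ h
  have hpow : (traceCon I).mk' (FreeMonoid.of a) ^ y.length =
      (traceCon I).mk' (FreeMonoid.of b) ^ x.length :=
    hη (by rw [map_pow, map_pow, ha, hb, ← map_pow, ← map_pow,
      FreeMonoid.pow_length_eq_of_commute hxy])
  have hba : b ≠ a := fun h => hirr a (h ▸ hab)
  have hproj := congrArg (traceProj (· = a) fun c d hc hd => by subst hc hd; exact hirr _) hpow
  simp only [map_pow, traceProj_mk'_of, if_pos, if_neg hba, one_pow] at hproj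
  have hlen := congrArg FreeMonoid.length hproj
  rw [FreeMonoid.length_pow, FreeMonoid.length_of, FreeMonoid.length_one, mul_one] at hlen
  exact hy (FreeMonoid.length_eq_zero.mp hlen)

theorem indep_of_eq_writes_of_eq_reads (hirr : ∀ a, ¬ I a a) (hsym : ∀ a b, I a b → I b a)
    (η : TraceMonoid I →* QueueMonoid A) (hη : Function.Injective η) {a b : Γ}
    {x y : FreeMonoid A} (hx : x ≠ 1) (hy : y ≠ 1)
    (ha : η ((traceCon I).mk' (FreeMonoid.of a)) = writes A x)
    (hb : η ((traceCon I).mk' (FreeMonoid.of b)) = reads A y) : I a b := by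
  classical
  have hab : a ≠ b := by
    rintro rfl
    exact writes_ne_reads x hy (ha.symm.trans hb)
  by_contra hnab
  have hp : ∀ c d, (c = a ∨ c = b) → (d = a ∨ d = b) → ¬ I c d := by
    rintro c d (rfl | rfl) (rfl | rfl)
    exacts [hirr _, hnab, fun h => hnab (hsym _ _ h), hirr _]
  have hlen : y.length ≤ (x ^ y.length).length := by
    rw [FreeMonoid.length_pow]
    exact Nat.le_mul_of_pos_right _ (Nat.pos_of_ne_zero (mt FreeMonoid.length_eq_zero.mp hx))
  -- with `|y|` copies of `a` written first, reading `y` commutes with one more write of `a`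
  have key : (traceCon I).mk' (FreeMonoid.of a) ^ y.length * (traceCon I).mk' (FreeMonoid.of b) *
        (traceCon I).mk' (FreeMonoid.of a) =
      (traceCon I).mk' (FreeMonoid.of a) ^ y.length * (traceCon I).mk' (FreeMonoid.of a) *
        (traceCon I).mk' (FreeMonoid.of b) :=
    hη (by
      rw [map_mul, map_mul, map_mul, map_mul, map_pow, ha, hb, ← map_pow]
      exact writes_mul_reads_mul_writes x hlen)
  have hproj := congrArg (traceProj _ hp) key
  simp only [map_mul, map_pow, traceProj_mk'_of, true_or, or_true, if_true, mul_assoc,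
    mul_right_inj] at hproj
  exact hab (List.cons.inj (congrArg FreeMonoid.toList hproj)).1.symm

theorem GammaPlus.exists_eq_writes {η : TraceMonoid I →* QueueMonoid A} {a : Γ}
    (ha : GammaPlus I η a) :
    ∃ x : FreeMonoid A, x ≠ 1 ∧ η ((traceCon I).mk' (FreeMonoid.of a)) = writes A x := by
  obtain ⟨w, hw, hp, hn⟩ := ha
  refine ⟨FreeMonoid.ofList (ppr w), fun h => hp (congrArg FreeMonoid.toList h), ?_⟩
  rw [← hw]
  exact congrArg (fun v => (queueCon A).mk' (FreeMonoid.ofList v)) (eq_map_inl_of_npr_eq_nil hn)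

theorem GammaMinus.exists_eq_reads {η : TraceMonoid I →* QueueMonoid A} {a : Γ}
    (ha : GammaMinus I η a) :
    ∃ y : FreeMonoid A, y ≠ 1 ∧ η ((traceCon I).mk' (FreeMonoid.of a)) = reads A y := by
  obtain ⟨w, hw, hp, hn⟩ := ha
  refine ⟨FreeMonoid.ofList (npr w), fun h => hn (congrArg FreeMonoid.toList h), ?_⟩
  rw [← hw]
  exact congrArg (fun v => (queueCon A).mk' (FreeMonoid.ofList v)) (eq_map_inr_of_ppr_eq_nil hp)

end Embedding

/-- If `η` embeds the trace monoid into the queue monoid, then no two letters of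
`Γ₊` are independent, no two letters of `Γ₋` are independent, and every letter of
`Γ₊` is independent of every letter of `Γ₋`: `(Γ₊ ∪ Γ₋, I)` is complete bipartite. -/
theorem stmt14 (Γ A : Type) [DecidableEq A] (I : Γ → Γ → Prop)
    (hirr : ∀ a, ¬ I a a) (hsym : ∀ a b, I a b → I b a)
    (η : TraceMonoid I →* QueueMonoid A) (hη : Function.Injective η) :
    (∀ a b : Γ, GammaPlus I η a → GammaPlus I η b → ¬ I a b) ∧
    (∀ a b : Γ, GammaMinus I η a → GammaMinus I η b → ¬ I a b) ∧
    (∀ a b : Γ, GammaPlus I η a → GammaMinus I η b → I a b) := by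
  refine ⟨fun a b ha hb => ?_, fun a b ha hb => ?_, fun a b ha hb => ?_⟩
  · obtain ⟨x, -, hx⟩ := ha.exists_eq_writes
    obtain ⟨y, hy, hy'⟩ := hb.exists_eq_writes
    exact not_indep_of_eq_map hirr η hη _ writes_injective hx hy' hy
  · obtain ⟨x, -, hx⟩ := ha.exists_eq_reads
    obtain ⟨y, hy, hy'⟩ := hb.exists_eq_reads
    exact not_indep_of_eq_map hirr η hη _ reads_injective hx hy' hy
  · obtain ⟨x, hx, hx'⟩ := ha.exists_eq_writes
    obtain ⟨y, hy, hy'⟩ := hb.exists_eq_reads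
    exact indep_of_eq_writes_of_eq_reads hirr hsym η hη hx hy hx' hy'
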